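/- Let zα, zβ be real numbers with zα + zβ > 0, let pk⁽⁰⁾ ∈ (0, 1/2) and δk < 0 with pk⁽¹⁾ = pk⁽⁰⁾ + δk > 0 for k = 1, 2, and let n(ρ) denote the unpooled-variance sample size for the composite endpoint as a function of the common correlation ρ. Let B_L(θ,λ) and B_U(θ,λ) be the lower and upper correlation bounds determined by θ = (p1⁽⁰⁾, p2⁽⁰⁾) and λ = (δ1, δ2). If B_L(θ,λ) ≤ ρ ≤ B_U(θ,λ), the composite probabilities p*⁽ⁱ⁾ lie in (0,1) throughout [B_L, B_U], and δ*(B_U(θ,λ)) < 0, then n(B_L(θ,λ)) ≤ n(ρ) ≤ n(B_U(θ,λ)); in particular the sample size attains its maximum over the admissible correlations at ρ = B_U(θ,λ). -/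

import Mathlib

open Real

/-- Probability of observing the composite endpoint given the two marginal event rates
and the correlation between the components. -/
noncomputable def pstar (p1 p2 ρ : ℝ) : ℝ :=
  1 - (1 - p1) * (1 - p2) - ρ * Real.sqrt (p1 * p2 * (1 - p1) * (1 - p2))

/-- Unpooled-variance total sample size for detecting a risk difference `d` with
control-group event rate `p`. -/
noncomputable def sampleSize (za zb p d : ℝ) : ℝ :=
  2 * (za + zb) ^ 2 * (p * (1 - p) + (p + d) * (1 - p - d)) / d ^ 2

/-- Lower bound on the common correlation of the two components, determined by the
control-group rates `(p1, p2)` and the marginal risk differences `(δ1, δ2)`. -/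
noncomputable def BL (p1 p2 δ1 δ2 : ℝ) : ℝ :=
  max (max (-Real.sqrt (p1 * p2 / ((1 - p1) * (1 - p2))))
           (-Real.sqrt ((1 - p1) * (1 - p2) / (p1 * p2))))
      (max (-Real.sqrt ((p1 + δ1) * (p2 + δ2) / ((1 - p1 - δ1) * (1 - p2 - δ2))))
           (-Real.sqrt ((1 - p1 - δ1) * (1 - p2 - δ2) / ((p1 + δ1) * (p2 + δ2)))))

/-- Upper bound on the common correlation of the two components, determined by the
control-group rates `(p1, p2)` and the marginal risk differences `(δ1, δ2)`. -/
noncomputable def BU (p1 p2 δ1 δ2 : ℝ) : ℝ :=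
  min (min (Real.sqrt (p1 * (1 - p2) / (p2 * (1 - p1))))
           (Real.sqrt (p2 * (1 - p1) / (p1 * (1 - p2)))))
      (min (Real.sqrt ((p1 + δ1) * (1 - p2 - δ2) / ((p2 + δ2) * (1 - p1 - δ1))))
           (Real.sqrt ((p2 + δ2) * (1 - p1 - δ1) / ((p1 + δ1) * (1 - p2 - δ2)))))

/-!
As functions of `ρ`, the composite probabilities `P = p*⁽⁰⁾` and `Q = p*⁽¹⁾` are affine with
slopes `-c₀`, `-c₁`, where `cᵢ = √(p₁p₂q₁q₂)` in group `i`, and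
`n = (z_α + z_β)² (s (2 - s) / d² - 1)` with `s = P + Q`, `d = P - Q > 0`. The derivative of
`s (2 - s) / d²` has the sign of `G = (c₀ - c₁) s (2 - s) - (c₀ + c₁) (1 - s) d`. Since
`K = (c₀ - c₁)(1 - s) + (c₀ + c₁) d` does not depend on `ρ`, `G = (c₀ - c₁) - (1 - s) K` with
`1 - s` increasing in `ρ`, so `G ≥ 0` on `[B_L, B_U]` follows from `G ≥ 0` at `B_U` (where
`s ≥ 1`, `G ≥ 0` is immediate). At `B_U` the Fréchet bounds `max p₁ p₂ ≤ p* ≤ p₁ + p₂` in both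
groups and `c₁ ≤ c₀` (the rates lie below `1/2` and decrease) give `G ≥ 0`.
-/

open Set

theorem sampleSize_sub_eq (za zb p q : ℝ) (h : p ≠ q) :
    sampleSize za zb p (q - p) = (za + zb) ^ 2 * ((p + q) * (2 - p - q) / (p - q) ^ 2 - 1) := by
  have : (p - q) ^ 2 ≠ 0 := pow_ne_zero 2 (sub_ne_zero.2 h)
  rw [sampleSize, show (q - p) ^ 2 = (p - q) ^ 2 by ring]
  field_simp
  ring

def derivNumer (c₀ c₁ p q : ℝ) : ℝ :=
  (c₀ - c₁) * ((p + q) * (2 - p - q)) - (c₀ + c₁) * (1 - p - q) * (p - q)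

theorem derivNumer_nonneg_of_one_le_add {c₀ c₁ p q : ℝ} (hc₁ : 0 ≤ c₁) (hc : c₁ ≤ c₀)
    (hpq : q ≤ p) (h₁ : 1 ≤ p + q) (h₂ : p + q ≤ 2) : 0 ≤ derivNumer c₀ c₁ p q := by
  unfold derivNumer
  have := mul_nonneg (sub_nonneg.2 hc)
    (mul_nonneg (by linarith : 0 ≤ p + q) (by linarith : 0 ≤ 2 - p - q))
  nlinarith [mul_nonneg (mul_nonneg (by linarith : 0 ≤ c₀ + c₁) (by linarith : 0 ≤ p + q - 1))
    (sub_nonneg.2 hpq)]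

theorem hasDerivAt_sum_mul_div_sq {p q : ℝ → ℝ} {c₀ c₁ r : ℝ} (hp : HasDerivAt p (-c₀) r)
    (hq : HasDerivAt q (-c₁) r) (h : q r ≠ p r) :
    HasDerivAt (fun r => (p r + q r) * (2 - p r - q r) / (p r - q r) ^ 2)
      (2 * derivNumer c₀ c₁ (p r) (q r) / (p r - q r) ^ 3) r := by
  have hd : p r - q r ≠ 0 := sub_ne_zero.2 h.symm
  refine (((hp.fun_add hq).fun_mul ((hp.const_sub 2).fun_sub hq)).fun_div
    ((hp.fun_sub hq).fun_pow 2) (pow_ne_zero 2 hd)).congr_deriv ?_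
  field_simp
  simp only [derivNumer]
  ring

theorem monotoneOn_sum_mul_div_sq {D : Set ℝ} (hD : Convex ℝ D) {p q : ℝ → ℝ} {c₀ c₁ : ℝ}
    (hp : ∀ r, HasDerivAt p (-c₀) r) (hq : ∀ r, HasDerivAt q (-c₁) r)
    (hd : ∀ r ∈ D, q r < p r) (hG : ∀ r ∈ D, 0 ≤ derivNumer c₀ c₁ (p r) (q r)) :
    MonotoneOn (fun r => (p r + q r) * (2 - p r - q r) / (p r - q r) ^ 2) D := by
  have hderiv r (hr : r ∈ D) := hasDerivAt_sum_mul_div_sq (hp r) (hq r) (hd r hr).ne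
  refine monotoneOn_of_hasDerivWithinAt_nonneg hD
    (fun r hr => (hderiv r hr).continuousAt.continuousWithinAt)
    (fun r hr => (hderiv r (interior_subset hr)).hasDerivWithinAt) fun r hr => ?_
  have := hd r (interior_subset hr)
  have := hG r (interior_subset hr)
  exact div_nonneg (by positivity) (pow_nonneg (by linarith) 3)

theorem derivNumer_nonneg_of_le (A₀ A₁ : ℝ) {c₀ c₁ r u : ℝ} (hc₁ : 0 ≤ c₁) (hc : c₁ ≤ c₀)
    (hru : r ≤ u) (hd : A₁ - r * c₁ ≤ A₀ - r * c₀) (hs : A₀ - r * c₀ + (A₁ - r * c₁) ≤ 2)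
    (hu : 0 ≤ derivNumer c₀ c₁ (A₀ - u * c₀) (A₁ - u * c₁)) :
    0 ≤ derivNumer c₀ c₁ (A₀ - r * c₀) (A₁ - r * c₁) := by
  rcases le_or_gt (1 - (A₀ - r * c₀) - (A₁ - r * c₁)) 0 with ht | ht
  · exact derivNumer_nonneg_of_one_le_add hc₁ hc hd (by linarith) hs
  · set K := (c₀ - c₁) * (1 - A₀ - A₁) + (c₀ + c₁) * (A₀ - A₁)
    have hG x : derivNumer c₀ c₁ (A₀ - x * c₀) (A₁ - x * c₁)
        = (c₀ - c₁) - (1 - (A₀ - x * c₀) - (A₁ - x * c₁)) * K := by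
      simp only [derivNumer, K]; ring
    rw [hG] at hu ⊢
    rcases le_or_gt K 0 with hK | hK
    · nlinarith [mul_nonneg ht.le (neg_nonneg.2 hK)]
    · nlinarith [mul_le_mul_of_nonneg_right hru (by linarith : 0 ≤ c₀ + c₁)]

theorem monotoneOn_sampleSize_affine (za zb A₀ A₁ : ℝ) {c₀ c₁ L U : ℝ} (hc₁ : 0 ≤ c₁)
    (hc : c₁ ≤ c₀) (hs : ∀ r ∈ Icc L U, A₀ - r * c₀ + (A₁ - r * c₁) ≤ 2)
    (hdU : A₁ - U * c₁ < A₀ - U * c₀) (hGU : 0 ≤ derivNumer c₀ c₁ (A₀ - U * c₀) (A₁ - U * c₁)) :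
    MonotoneOn (fun r => sampleSize za zb (A₀ - r * c₀) (A₁ - r * c₁ - (A₀ - r * c₀)))
      (Icc L U) := by
  have hd : ∀ r ∈ Icc L U, A₁ - r * c₁ < A₀ - r * c₀ := fun r hr => by
    nlinarith [mul_le_mul_of_nonneg_right hr.2 (sub_nonneg.2 hc)]
  have hline (A c r : ℝ) : HasDerivAt (fun r => A - r * c) (-c) r := by
    simpa using (hasDerivAt_mul_const c).const_sub A
  have hf := monotoneOn_sum_mul_div_sq (convex_Icc L U) (hline A₀ c₀) (hline A₁ c₁) hd
    fun r hr => derivNumer_nonneg_of_le A₀ A₁ hc₁ hc hr.2 (hd r hr).le (hs r hr) hGU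
  intro x hx y hy hxy
  simp only [sampleSize_sub_eq za zb _ _ (hd x hx).ne', sampleSize_sub_eq za zb _ _ (hd y hy).ne']
  gcongr ?_ * (?_ - 1)
  exact hf hx hy hxy

theorem mul_sqrt_mul_le_of_le_sqrt_div {a b r : ℝ} (ha : 0 < a) (hb : 0 < b) (hr : r ≤ √(a / b)) :
    r * √(a * b) ≤ a := by
  calc r * √(a * b) ≤ √(a / b) * √(a * b) := mul_le_mul_of_nonneg_right hr (sqrt_nonneg _)
    _ = a := by
      rw [← sqrt_mul (div_nonneg ha.le hb.le), show a / b * (a * b) = a ^ 2 by field_simp]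
      exact sqrt_sq ha.le

theorem neg_le_mul_sqrt_mul_of_neg_sqrt_div_le {a b r : ℝ} (ha : 0 < a) (hb : 0 < b)
    (hr : -√(a / b) ≤ r) : -a ≤ r * √(a * b) := by
  have := mul_sqrt_mul_le_of_le_sqrt_div ha hb (neg_le.1 hr)
  linarith

-- The range of correlations of two Bernoulli variables with means `p₁, p₂`: at correlation `ρ`
-- the probability of both events is `p₁ p₂ + ρ √(p₁p₂q₁q₂)`, which must lie between
-- `max 0 (p₁ + p₂ - 1)` and `min p₁ p₂`.
noncomputable def corrUpper (p₁ p₂ : ℝ) : ℝ :=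
  min (√(p₁ * (1 - p₂) / (p₂ * (1 - p₁)))) (√(p₂ * (1 - p₁) / (p₁ * (1 - p₂))))

noncomputable def corrLower (p₁ p₂ : ℝ) : ℝ :=
  max (-√(p₁ * p₂ / ((1 - p₁) * (1 - p₂)))) (-√((1 - p₁) * (1 - p₂) / (p₁ * p₂)))

theorem BU_eq (p1 p2 δ1 δ2 : ℝ) :
    BU p1 p2 δ1 δ2 = min (corrUpper p1 p2) (corrUpper (p1 + δ1) (p2 + δ2)) := by
  simp only [BU, corrUpper, sub_sub]

theorem BL_eq (p1 p2 δ1 δ2 : ℝ) :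
    BL p1 p2 δ1 δ2 = max (corrLower p1 p2) (corrLower (p1 + δ1) (p2 + δ2)) := by
  simp only [BL, corrLower, sub_sub]

theorem BU_nonneg (p1 p2 δ1 δ2 : ℝ) : 0 ≤ BU p1 p2 δ1 δ2 :=
  le_min (le_min (sqrt_nonneg _) (sqrt_nonneg _)) (le_min (sqrt_nonneg _) (sqrt_nonneg _))

theorem pstar_mem_Icc {p₁ p₂ r : ℝ} (hp₁ : p₁ ∈ Ioo 0 1) (hp₂ : p₂ ∈ Ioo 0 1)
    (hr : r ∈ Icc (corrLower p₁ p₂) (corrUpper p₁ p₂)) :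
    pstar p₁ p₂ r ∈ Icc (max p₁ p₂) (p₁ + p₂) := by
  obtain ⟨hp₁₀, hp₁₁⟩ := hp₁
  obtain ⟨hp₂₀, hp₂₁⟩ := hp₂
  have hq₁ : 0 < 1 - p₁ := by linarith
  have hq₂ : 0 < 1 - p₂ := by linarith
  have h₁ := mul_sqrt_mul_le_of_le_sqrt_div (mul_pos hp₂₀ hq₁) (mul_pos hp₁₀ hq₂)
    (hr.2.trans (min_le_right _ _))
  have h₂ := mul_sqrt_mul_le_of_le_sqrt_div (mul_pos hp₁₀ hq₂) (mul_pos hp₂₀ hq₁)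
    (hr.2.trans (min_le_left _ _))
  have h₃ := neg_le_mul_sqrt_mul_of_neg_sqrt_div_le (mul_pos hp₁₀ hp₂₀) (mul_pos hq₁ hq₂)
    ((le_max_left _ _).trans hr.1)
  rw [show p₂ * (1 - p₁) * (p₁ * (1 - p₂)) = p₁ * p₂ * (1 - p₁) * (1 - p₂) by ring] at h₁
  rw [show p₁ * (1 - p₂) * (p₂ * (1 - p₁)) = p₁ * p₂ * (1 - p₁) * (1 - p₂) by ring] at h₂
  rw [show p₁ * p₂ * ((1 - p₁) * (1 - p₂)) = p₁ * p₂ * (1 - p₁) * (1 - p₂) by ring] at h₃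
  unfold pstar
  exact ⟨max_le (by linarith) (by linarith), by linarith⟩

theorem mul_one_sub_le_mul_one_sub {x y : ℝ} (hyx : y ≤ x) (hxy : x + y ≤ 1) :
    y * (1 - y) ≤ x * (1 - x) := by
  nlinarith [mul_nonneg (sub_nonneg.2 hyx) (by linarith : 0 ≤ 1 - x - y)]

theorem four_mul_mul_le {v₁ v₂ w₁ w₂ M e : ℝ} (hw₁ : 0 ≤ w₁) (hw₂ : 0 ≤ w₂) (hv₁ : w₁ ≤ v₁)
    (hv₂ : w₂ ≤ v₂) (hM₁ : 4 * w₁ ≤ M) (hM₂ : 4 * w₂ ≤ M) (he : e ≤ (v₁ - w₁) + (v₂ - w₂)) :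
    4 * (w₁ * w₂) * e ≤ (v₁ * v₂ - w₁ * w₂) * M := by
  have h₁ := mul_le_mul_of_nonneg_left hM₁ (mul_nonneg hw₂ (sub_nonneg.2 hv₁))
  have h₂ := mul_le_mul_of_nonneg_left hM₂ (mul_nonneg hw₁ (sub_nonneg.2 hv₂))
  have h₃ := mul_le_mul_of_nonneg_left he (by positivity : 0 ≤ 4 * (w₁ * w₂))
  have h₄ := mul_nonneg (mul_nonneg (sub_nonneg.2 hv₁) (sub_nonneg.2 hv₂)) (by linarith : 0 ≤ M)
  nlinarith

theorem two_mul_add_mul_le_sub_mul {x₁ x₂ y₁ y₂ P Q : ℝ} (hy₁ : 0 < y₁) (hy₂ : 0 < y₂)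
    (h₁ : y₁ ≤ x₁) (h₂ : y₂ ≤ x₂) (hP₁ : x₁ ≤ P) (hP₂ : x₂ ≤ P) (hQ₁ : y₁ ≤ Q) (hQ₂ : y₂ ≤ Q)
    (ht : 0 < 1 - P - Q) (hda : P - Q ≤ (1 - y₁) * (1 - y₂) - (1 - x₁) * (1 - x₂)) :
    2 * (x₁ * x₂ * (1 - x₁) * (1 - x₂) + y₁ * y₂ * (1 - y₁) * (1 - y₂)) * ((1 - P - Q) * (P - Q))
      ≤ (x₁ * x₂ * (1 - x₁) * (1 - x₂) - y₁ * y₂ * (1 - y₁) * (1 - y₂)) *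
          ((P + Q) * (2 - P - Q)) := by
  have hv₁ := mul_one_sub_le_mul_one_sub h₁ (by linarith)
  have hv₂ := mul_one_sub_le_mul_one_sub h₂ (by linarith)
  have hM₁ := mul_one_sub_le_mul_one_sub hQ₁ (by linarith)
  have hM₂ := mul_one_sub_le_mul_one_sub hQ₂ (by linarith)
  have he : (1 - P - Q) * (P - Q)
      ≤ (x₁ * (1 - x₁) - y₁ * (1 - y₁)) + (x₂ * (1 - x₂) - y₂ * (1 - y₂)) := by
    have := mul_le_mul_of_nonneg_left hda ht.le
    nlinarith [mul_nonneg (sub_nonneg.2 h₁) (mul_nonneg ht.le hy₂.le),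
      mul_nonneg (sub_nonneg.2 h₂) (mul_nonneg ht.le (hy₁.trans_le h₁).le)]
  have key := four_mul_mul_le (M := 4 * (Q * (1 - Q)) + (P - Q) ^ 2) (by nlinarith) (by nlinarith)
    hv₁ hv₂ (by nlinarith) (by nlinarith) he
  -- `(X - Y) s (2 - s) - 2 (X + Y) t d = (X - Y) (4 Q (1 - Q) + d²) - 4 Y t d`, where `X, Y` are
  -- the two products, `s = P + Q`, `d = P - Q` and `t = 1 - P - Q`
  linear_combination key

theorem derivNumer_nonneg_of_sq {c₀ c₁ p q : ℝ} (hc₁ : 0 < c₁) (hc : c₁ ≤ c₀)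
    (htd : 0 ≤ (1 - p - q) * (p - q))
    (h : 2 * (c₀ ^ 2 + c₁ ^ 2) * ((1 - p - q) * (p - q))
      ≤ (c₀ ^ 2 - c₁ ^ 2) * ((p + q) * (2 - p - q))) :
    0 ≤ derivNumer c₀ c₁ p q := by
  have hσ : 0 < c₀ + c₁ := by linarith
  have hsq : (c₀ + c₁) ^ 2 ≤ 2 * (c₀ ^ 2 + c₁ ^ 2) := by nlinarith [sq_nonneg (c₀ - c₁)]
  refine nonneg_of_mul_nonneg_right ?_ hσ
  have := mul_le_mul_of_nonneg_right hsq htd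
  unfold derivNumer
  linear_combination h + this

theorem mul_mul_one_sub_le {x₁ x₂ y₁ y₂ : ℝ} (hy₁ : 0 ≤ y₁) (hy₂ : 0 ≤ y₂) (h₁ : y₁ ≤ x₁)
    (h₂ : y₂ ≤ x₂) (hx₁ : x₁ ≤ 1 / 2) (hx₂ : x₂ ≤ 1 / 2) :
    y₁ * y₂ * (1 - y₁) * (1 - y₂) ≤ x₁ * x₂ * (1 - x₁) * (1 - x₂) := by
  have := mul_le_mul (mul_one_sub_le_mul_one_sub h₁ (by linarith))
    (mul_one_sub_le_mul_one_sub h₂ (by linarith)) (by nlinarith) (by nlinarith)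
  linarith

theorem derivNumer_pstar_nonneg {x₁ x₂ y₁ y₂ u : ℝ} (hy₁ : 0 < y₁) (hy₂ : 0 < y₂)
    (h₁ : y₁ ≤ x₁) (h₂ : y₂ ≤ x₂) (hx₁ : x₁ < 1 / 2) (hx₂ : x₂ < 1 / 2) (hu : 0 ≤ u)
    (hP : pstar x₁ x₂ u ∈ Icc (max x₁ x₂) (x₁ + x₂))
    (hQ : pstar y₁ y₂ u ∈ Icc (max y₁ y₂) (y₁ + y₂))
    (hd : pstar y₁ y₂ u < pstar x₁ x₂ u) :
    0 ≤ derivNumer (√(x₁ * x₂ * (1 - x₁) * (1 - x₂))) (√(y₁ * y₂ * (1 - y₁) * (1 - y₂)))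
      (pstar x₁ x₂ u) (pstar y₁ y₂ u) := by
  have hc := sqrt_le_sqrt (mul_mul_one_sub_le hy₁.le hy₂.le h₁ h₂ hx₁.le hx₂.le)
  have hda : pstar x₁ x₂ u - pstar y₁ y₂ u ≤ (1 - y₁) * (1 - y₂) - (1 - x₁) * (1 - x₂) := by
    unfold pstar
    nlinarith [mul_nonneg hu (sub_nonneg.2 hc)]
  obtain ⟨hP₀, hP₁⟩ := hP
  obtain ⟨hQ₀, hQ₁⟩ := hQ
  rw [max_le_iff] at hP₀ hQ₀
  have hqx₁ : 0 < 1 - x₁ := by linarith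
  have hqx₂ : 0 < 1 - x₂ := by linarith
  have hqy₁ : 0 < 1 - y₁ := by linarith
  have hqy₂ : 0 < 1 - y₂ := by linarith
  rcases le_or_gt 1 (pstar x₁ x₂ u + pstar y₁ y₂ u) with hs | hs
  · exact derivNumer_nonneg_of_one_le_add (sqrt_nonneg _) hc hd.le hs (by linarith)
  · have hx₁₀ : 0 < x₁ := hy₁.trans_le h₁
    have hx₂₀ : 0 < x₂ := hy₂.trans_le h₂
    refine derivNumer_nonneg_of_sq (sqrt_pos.2 (by positivity)) hc
      (mul_nonneg (by linarith) (by linarith)) ?_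
    rw [sq_sqrt (by positivity), sq_sqrt (by positivity)]
    exact two_mul_add_mul_le_sub_mul hy₁ hy₂ h₁ h₂ hP₀.1 hP₀.2 hQ₀.1 hQ₀.2 (by linarith) hda

theorem composite_sample_size_bounds_general
    (za zb p1 p2 δ1 δ2 ρ : ℝ)
    (hp1 : p1 ∈ Set.Ioo (0:ℝ) (1/2)) (hp2 : p2 ∈ Set.Ioo (0:ℝ) (1/2))
    (hδ1 : δ1 < 0) (hδ2 : δ2 < 0)
    (hp1' : 0 < p1 + δ1) (hp2' : 0 < p2 + δ2)
    (hρL : BL p1 p2 δ1 δ2 ≤ ρ) (hρU : ρ ≤ BU p1 p2 δ1 δ2)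
    (hdstar : pstar (p1 + δ1) (p2 + δ2) (BU p1 p2 δ1 δ2)
        - pstar p1 p2 (BU p1 p2 δ1 δ2) < 0) :
    sampleSize za zb (pstar p1 p2 (BL p1 p2 δ1 δ2))
        (pstar (p1 + δ1) (p2 + δ2) (BL p1 p2 δ1 δ2) - pstar p1 p2 (BL p1 p2 δ1 δ2))
      ≤ sampleSize za zb (pstar p1 p2 ρ)
        (pstar (p1 + δ1) (p2 + δ2) ρ - pstar p1 p2 ρ) ∧
    sampleSize za zb (pstar p1 p2 ρ)
        (pstar (p1 + δ1) (p2 + δ2) ρ - pstar p1 p2 ρ)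
      ≤ sampleSize za zb (pstar p1 p2 (BU p1 p2 δ1 δ2))
        (pstar (p1 + δ1) (p2 + δ2) (BU p1 p2 δ1 δ2) - pstar p1 p2 (BU p1 p2 δ1 δ2)) := by
  obtain ⟨hp1₀, hp1₁⟩ := hp1
  obtain ⟨hp2₀, hp2₁⟩ := hp2
  have hLU : BL p1 p2 δ1 δ2 ≤ BU p1 p2 δ1 δ2 := hρL.trans hρU
  have hU : BU p1 p2 δ1 δ2 ∈ Icc (BL p1 p2 δ1 δ2) (BU p1 p2 δ1 δ2) := right_mem_Icc.2 hLU
  have hfrechet : ∀ r ∈ Icc (BL p1 p2 δ1 δ2) (BU p1 p2 δ1 δ2),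
      pstar p1 p2 r ∈ Icc (max p1 p2) (p1 + p2) ∧
      pstar (p1 + δ1) (p2 + δ2) r ∈ Icc (max (p1 + δ1) (p2 + δ2)) (p1 + δ1 + (p2 + δ2)) := by
    intro r ⟨hrL, hrU⟩
    rw [BL_eq, max_le_iff] at hrL
    rw [BU_eq, le_min_iff] at hrU
    exact ⟨pstar_mem_Icc ⟨hp1₀, by linarith⟩ ⟨hp2₀, by linarith⟩ ⟨hrL.1, hrU.1⟩,
      pstar_mem_Icc ⟨hp1', by linarith⟩ ⟨hp2', by linarith⟩ ⟨hrL.2, hrU.2⟩⟩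
  have hdU := sub_neg.1 hdstar
  have hmono := monotoneOn_sampleSize_affine za zb (1 - (1 - p1) * (1 - p2))
    (1 - (1 - (p1 + δ1)) * (1 - (p2 + δ2))) (sqrt_nonneg _)
    (sqrt_le_sqrt (mul_mul_one_sub_le hp1'.le hp2'.le (by linarith) (by linarith) hp1₁.le hp2₁.le))
    (fun r hr => show pstar p1 p2 r + pstar (p1 + δ1) (p2 + δ2) r ≤ 2 by
      linarith [(hfrechet r hr).1.2, (hfrechet r hr).2.2]) hdU
    (derivNumer_pstar_nonneg hp1' hp2' (by linarith) (by linarith) hp1₁ hp2₁ (BU_nonneg p1 p2 δ1 δ2)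
      (hfrechet _ hU).1 (hfrechet _ hU).2 hdU)
  exact ⟨hmono (left_mem_Icc.2 hLU) ⟨hρL, hρU⟩ hρL, hmono ⟨hρL, hρU⟩ (right_mem_Icc.2 hLU) hρU⟩

/-- Over the admissible correlations `[B_L(θ,λ), B_U(θ,λ)]`, the composite-endpoint
sample size is bounded below by its value at `B_L` and above by its value at `B_U`;
in particular it attains its maximum at `ρ = B_U(θ,λ)`. -/
theorem composite_sample_size_bounds
    (za zb p1 p2 δ1 δ2 ρ : ℝ) (hz : 0 < za + zb)
    (hp1 : p1 ∈ Set.Ioo (0:ℝ) (1/2)) (hp2 : p2 ∈ Set.Ioo (0:ℝ) (1/2))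
    (hδ1 : δ1 < 0) (hδ2 : δ2 < 0)
    (hp1' : 0 < p1 + δ1) (hp2' : 0 < p2 + δ2)
    (hρL : BL p1 p2 δ1 δ2 ≤ ρ) (hρU : ρ ≤ BU p1 p2 δ1 δ2)
    (hadm : ∀ r ∈ Set.Icc (BL p1 p2 δ1 δ2) (BU p1 p2 δ1 δ2),
      pstar p1 p2 r ∈ Set.Ioo (0:ℝ) 1 ∧
      pstar (p1 + δ1) (p2 + δ2) r ∈ Set.Ioo (0:ℝ) 1)
    (hdstar : pstar (p1 + δ1) (p2 + δ2) (BU p1 p2 δ1 δ2)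
        - pstar p1 p2 (BU p1 p2 δ1 δ2) < 0) :
    sampleSize za zb (pstar p1 p2 (BL p1 p2 δ1 δ2))
        (pstar (p1 + δ1) (p2 + δ2) (BL p1 p2 δ1 δ2) - pstar p1 p2 (BL p1 p2 δ1 δ2))
      ≤ sampleSize za zb (pstar p1 p2 ρ)
        (pstar (p1 + δ1) (p2 + δ2) ρ - pstar p1 p2 ρ) ∧
    sampleSize za zb (pstar p1 p2 ρ)
        (pstar (p1 + δ1) (p2 + δ2) ρ - pstar p1 p2 ρ)
      ≤ sampleSize za zb (pstar p1 p2 (BU p1 p2 δ1 δ2))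
        (pstar (p1 + δ1) (p2 + δ2) (BU p1 p2 δ1 δ2) - pstar p1 p2 (BU p1 p2 δ1 δ2)) :=
  composite_sample_size_bounds_general za zb p1 p2 δ1 δ2 ρ hp1 hp2 hδ1 hδ2 hp1' hp2' hρL hρU hdstar
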